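/- arXiv:1910.09793 — 6 statements merged into one kernel-verified Lean document; each statement's English description precedes it below -/
import Mathlib

section
/- There exists a spanning tree T of the reduction graph G_red with lifetime at least one if and only if there exists an index set I ⊆ {1,…,k} with |I| ≤ p such that ⋃_{i∈I} B_i = U (i.e., the set cover instance admits a cover by at most p of the given subsets). -/
open SimpleGraph

/-- Vertices of the reduction graph: sink `v0`, hub nodes `A`, `C`,
third-row nodes `r_1,…,r_k`, subset nodes `s_1,…,s_k`, element nodes `w_1,…,w_n`. -/
inductive RedVertex (k n : ℕ) : Type where
  | sink : RedVertex k n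
  | hubA : RedVertex k n
  | hubC : RedVertex k n
  | row : Fin k → RedVertex k n
  | sub : Fin k → RedVertex k n
  | elt : Fin n → RedVertex k n
  deriving DecidableEq

/-- Base relation giving the edges of the reduction graph. -/
def redRel {k n : ℕ} (B : Fin k → Finset (Fin n)) :
    RedVertex k n → RedVertex k n → Prop
  | .sink, .hubA => True
  | .sink, .hubC => True
  | .hubA, .row _ => True
  | .hubC, .sub _ => True
  | .row i, .sub i' => i = i'
  | .sub i, .elt j => j ∈ B i
  | _, _ => False

/-- The reduction graph `G_red`. -/
def GRed {k n : ℕ} (B : Fin k → Finset (Fin n)) : SimpleGraph (RedVertex k n) :=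
  SimpleGraph.fromRel (redRel B)

/-- `x` is a descendant of `u` in the tree `T` rooted at the sink:
`x ≠ u`, `x ≠ v0`, and the unique path in `T` from `x` to the sink passes through `u`. -/
def IsDesc {k n : ℕ} (T : SimpleGraph (RedVertex k n)) (u x : RedVertex k n) : Prop :=
  x ≠ u ∧ x ≠ RedVertex.sink ∧ ∀ p : T.Path x RedVertex.sink, u ∈ p.1.support

/-- `desc_T(u)`: the number of descendants of `u` in `T`. -/
noncomputable def descCount {k n : ℕ} (T : SimpleGraph (RedVertex k n))
    (u : RedVertex k n) : ℕ :=
  {x | IsDesc T u x}.ncard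

/-- `v` is the `T`-parent of `u`: it is a neighbor of `u` lying on the unique
path in `T` from `u` to the sink. -/
def IsParent {k n : ℕ} (T : SimpleGraph (RedVertex k n)) (u v : RedVertex k n) : Prop :=
  T.Adj u v ∧ ∀ p : T.Path u RedVertex.sink, v ∈ p.1.support

/-- Energy assignment on the vertices of the reduction graph
(the sink has unlimited energy; its value here is irrelevant). -/
noncomputable def energy {k n : ℕ} (B : Fin k → Finset (Fin n)) (p : ℕ) (a : ℝ) :
    RedVertex k n → ℝ
  | .sink => 0
  | .hubA => 2 * (k : ℝ) - (p : ℝ) + 1 + a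
  | .hubC => (n : ℝ) + (p : ℝ) + 1 + a
  | .row _ => 2 + a
  | .sub i => ((B i).card : ℝ) + 1 + a
  | .elt _ => 1 + a

/-- `T` has lifetime at least one: `desc_T(u) + 1 + a ≤ E(u)` for every `u ≠ v0`. -/
def LifetimeGeOne {k n : ℕ} (B : Fin k → Finset (Fin n)) (p : ℕ) (a : ℝ)
    (T : SimpleGraph (RedVertex k n)) : Prop :=
  ∀ u : RedVertex k n, u ≠ RedVertex.sink →
    (descCount T u : ℝ) + 1 + a ≤ energy B p a u


deriving instance Fintype for RedVertex

lemma RedVertex.sub_injective {k n : ℕ} : Function.Injective (RedVertex.sub (k:=k) (n:=n)) :=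
  fun a b h => by injection h

lemma RedVertex.elt_injective {k n : ℕ} : Function.Injective (RedVertex.elt (k:=k) (n:=n)) :=
  fun a b h => by injection h

lemma RedVertex.row_injective {k n : ℕ} : Function.Injective (RedVertex.row (k:=k) (n:=n)) :=
  fun a b h => by injection h

lemma gred_adj_elt {k n : ℕ} {B : Fin k → Finset (Fin n)} {j : Fin n} {v : RedVertex k n} :
    (GRed B).Adj (RedVertex.elt j) v ↔ ∃ i, v = RedVertex.sub i ∧ j ∈ B i := by
  cases v <;> simp [GRed, fromRel_adj, redRel]

lemma gred_adj_sub {k n : ℕ} {B : Fin k → Finset (Fin n)} {i : Fin k} {v : RedVertex k n} :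
    (GRed B).Adj (RedVertex.sub i) v →
      v = RedVertex.hubC ∨ v = RedVertex.row i ∨ ∃ j, v = RedVertex.elt j ∧ j ∈ B i := by
  cases v <;> simp [GRed, fromRel_adj, redRel, eq_comm]


namespace ParentTree

variable {V : Type*} [DecidableEq V] (root : V) (f : V → V) (d : V → ℕ)

/-- The graph induced by a parent function `f` with designated root. -/
def pT : SimpleGraph V := SimpleGraph.fromRel (fun u v => u ≠ root ∧ v = f u)

lemma pT_adj {u v : V} :
    (pT root f).Adj u v ↔ u ≠ v ∧ ((u ≠ root ∧ v = f u) ∨ (v ≠ root ∧ u = f v)) := by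
  simp [pT, fromRel_adj]

lemma pT_adj_self (hstep : ∀ u, u ≠ root → d (f u) < d u)
    (x : V) (hx : x ≠ root) : (pT root f).Adj x (f x) := by
  refine (pT_adj root f).mpr ⟨?_, Or.inl ⟨hx, rfl⟩⟩
  intro he
  exact absurd (congrArg d he).symm (hstep x hx).ne

/-- The canonical walk from a vertex to the root, following parents. -/
noncomputable def canon (hstep : ∀ u, u ≠ root → d (f u) < d u) (x : V) :
    (pT root f).Walk x root :=
  if h : x = root then Walk.nil.copy h.symm rfl
  else Walk.cons (pT_adj_self root f d hstep x h) (canon hstep (f x))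
termination_by d x
decreasing_by exact hstep x h

variable (hstep : ∀ u, u ≠ root → d (f u) < d u)

include hstep

lemma canon_support_root : (canon root f d hstep root).support = [root] := by
  rw [canon]; simp

lemma canon_of_ne {x : V} (h : x ≠ root) :
    canon root f d hstep x
      = Walk.cons (pT_adj_self root f d hstep x h) (canon root f d hstep (f x)) := by
  rw [canon]; simp [h]

lemma canon_support_of_ne {x : V} (h : x ≠ root) :
    (canon root f d hstep x).support = x :: (canon root f d hstep (f x)).support := by
  rw [canon_of_ne root f d hstep h]; simp

lemma canon_support_le (x : V) : ∀ z ∈ (canon root f d hstep x).support, d z ≤ d x := by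
  by_cases h : x = root
  · subst h
    rw [canon_support_root]
    rintro z hz
    simp only [List.mem_singleton] at hz
    subst hz; exact le_rfl
  · rw [canon_support_of_ne root f d hstep h]
    rintro z hz
    rcases List.mem_cons.mp hz with rfl | hz
    · exact le_rfl
    · exact (canon_support_le (f x) z hz).trans (hstep x h).le
termination_by d x
decreasing_by exact hstep x h

lemma canon_isPath (x : V) : (canon root f d hstep x).IsPath := by
  by_cases h : x = root
  · subst h; rw [canon]; simp
  · rw [canon_of_ne root f d hstep h]
    refine (canon_isPath (f x)).cons ?_
    intro hx
    exact absurd (canon_support_le root f d hstep (f x) x hx)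
      (not_le.mpr (hstep x h))
termination_by d x
decreasing_by exact hstep x h

lemma canon_unique {x : V} (p : (pT root f).Walk x root) (hp : p.IsPath) :
    p = canon root f d hstep x := by
  suffices h : ∀ m (x : V) (p : (pT root f).Walk x root), p.length ≤ m → p.IsPath →
      p = canon root f d hstep x from h p.length x p le_rfl hp
  intro m
  induction m with
  | zero =>
    intro x p hl hp
    by_cases h : x = root
    · subst h
      rw [Walk.isPath_iff_eq_nil.mp hp, canon]; simp
    · exfalso
      have := Walk.not_nil_of_ne h (p := p)
      rw [Walk.nil_iff_length_eq] at this
      omega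
  | succ m ih =>
    intro x p hl hp
    by_cases h : x = root
    · subst h
      rw [Walk.isPath_iff_eq_nil.mp hp, canon]; simp
    · obtain ⟨v, hadj, q, hq⟩ := (Walk.not_nil_iff (p := p)).mp (Walk.not_nil_of_ne h)
      have hql : q.length ≤ m := by
        have := congrArg Walk.length hq
        rw [Walk.length_cons] at this
        omega
      rw [hq] at hp ⊢
      rw [Walk.cons_isPath_iff] at hp
      rcases (pT_adj root f).mp hadj with ⟨hne, ⟨hur, hv⟩ | ⟨hvr, hx⟩⟩
      · subst hv
        rw [canon_of_ne root f d hstep hur, ih _ q hql hp.1]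
      · exfalso
        apply hp.2
        rw [ih _ q hql hp.1, canon_support_of_ne root f d hstep hvr]
        exact List.mem_cons_of_mem _ (hx ▸ Walk.start_mem_support _)

lemma pT_connected : (pT root f).Connected := by
  haveI : Nonempty V := ⟨root⟩
  refine Connected.mk fun x y => ?_
  exact (canon root f d hstep x).reachable.trans (canon root f d hstep y).reachable.symm

lemma adj_max {x w : V} (hw : (pT root f).Adj x w) (hdw : d w ≤ d x) : w = f x := by
  rcases (pT_adj root f).mp hw with ⟨_, ⟨_, rfl⟩ | ⟨hwr, rfl⟩⟩
  · rfl
  · exact absurd hdw (not_le.mpr (hstep w hwr))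

lemma no_cycle_at_max {x : V} (c : (pT root f).Walk x x) (hc : c.IsCycle)
    (hmax : ∀ z ∈ c.support, d z ≤ d x) : False := by
  cases c with
  | nil => exact hc.not_of_nil
  | @cons _ y _ h q =>
    have hy : y = f x := adj_max root f d hstep h
      (hmax y (by simp [Walk.support_cons, Walk.start_mem_support]))
    have hqlen : 2 ≤ q.length := by
      have := hc.three_le_length
      simp only [Walk.length_cons] at this
      omega
    have hqrev : ¬ q.reverse.Nil := by
      rw [Walk.nil_iff_length_eq, Walk.length_reverse]
      omega
    obtain ⟨z, hxz, q2, hq2⟩ := Walk.not_nil_iff.mp hqrev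
    have hzq : z ∈ q.support := by
      have : z ∈ q.reverse.support := by
        rw [hq2]; simp
      rwa [Walk.support_reverse, List.mem_reverse] at this
    have hz : z = f x := adj_max root f d hstep hxz
      (hmax z (by simp only [Walk.support_cons, List.mem_cons]; exact Or.inr hzq))
    have hedge : s(x, z) ∈ q.edges := by
      have : s(x, z) ∈ q.reverse.edges := by rw [hq2]; simp
      rwa [Walk.edges_reverse, List.mem_reverse] at this
    have hnodup : ((Walk.cons h q).edges).Nodup := hc.isTrail.edges_nodup
    rw [Walk.edges_cons, List.nodup_cons] at hnodup
    apply hnodup.1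
    have hyz : s(x, y) = s(x, z) := by rw [hy, hz]
    exact hyz ▸ hedge

lemma pT_acyclic : (pT root f).IsAcyclic := by
  intro v c hc
  have hne : c.support.toFinset.Nonempty :=
    ⟨v, List.mem_toFinset.mpr (Walk.start_mem_support c)⟩
  obtain ⟨x, hx, hmax⟩ := Finset.exists_max_image c.support.toFinset d hne
  rw [List.mem_toFinset] at hx
  refine no_cycle_at_max root f d hstep (c.rotate x hx) (hc.rotate hx) ?_
  intro z hz
  refine hmax z ?_
  rw [List.mem_toFinset]
  rcases List.mem_cons.mp (by rwa [Walk.support_eq_cons (c.rotate x hx)] at hz) with rfl | hz'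
  · exact hx
  · exact List.mem_of_mem_tail (((Walk.support_rotate c x hx).mem_iff).mp hz')

lemma pT_isTree : (pT root f).IsTree :=
  ⟨pT_connected root f d hstep, pT_acyclic root f d hstep⟩

end ParentTree

/-- Parent function used in the reverse direction construction. -/
def redParent {k n : ℕ} (I : Finset (Fin k)) (ch : Fin n → Fin k) :
    RedVertex k n → RedVertex k n
  | .sink => .sink
  | .hubA => .sink
  | .hubC => .sink
  | .row _ => .hubA
  | .sub i => if i ∈ I then .hubC else .row i
  | .elt j => .sub (ch j)

/-- Depth function certifying well-foundedness of `redParent`. -/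
def redDepth {k n : ℕ} (I : Finset (Fin k)) : RedVertex k n → ℕ
  | .sink => 0
  | .hubA => 1
  | .hubC => 1
  | .row _ => 2
  | .sub i => if i ∈ I then 2 else 3
  | .elt _ => 3

lemma redStep {k n : ℕ} (I : Finset (Fin k)) (ch : Fin n → Fin k)
    (hch : ∀ j, ch j ∈ I) :
    ∀ u : RedVertex k n, u ≠ RedVertex.sink →
      redDepth I (redParent I ch u) < redDepth I u := by
  intro u hu
  cases u with
  | sink => exact absurd rfl hu
  | hubA => simp [redParent, redDepth]
  | hubC => simp [redParent, redDepth]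
  | row i => simp [redParent, redDepth]
  | sub i => by_cases h : i ∈ I <;> simp [redParent, redDepth, h]
  | elt j => simp [redParent, redDepth, hch j]

section Reverse

variable {k n : ℕ} {B : Fin k → Finset (Fin n)} {I : Finset (Fin k)} {ch : Fin n → Fin k}

lemma gred_parent (hchB : ∀ j, j ∈ B (ch j)) :
    ∀ x : RedVertex k n, x ≠ RedVertex.sink → (GRed B).Adj x (redParent I ch x) := by
  intro x hx
  cases x with
  | sink => exact absurd rfl hx
  | hubA => simp [GRed, fromRel_adj, redParent, redRel]
  | hubC => simp [GRed, fromRel_adj, redParent, redRel]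
  | row i => simp [GRed, fromRel_adj, redParent, redRel]
  | sub i => by_cases h : i ∈ I <;> simp [GRed, fromRel_adj, redParent, redRel, h]
  | elt j => simp [GRed, fromRel_adj, redParent, redRel, hchB j]

variable (hchI : ∀ j, ch j ∈ I)

/-- Abbreviation for the constructed spanning tree. -/
local notation "Trev" => ParentTree.pT (RedVertex.sink : RedVertex k n) (redParent I ch)

local notation "canonF" => ParentTree.canon (RedVertex.sink : RedVertex k n)
  (redParent I ch) (redDepth I) (redStep I ch hchI)

variable (hchB : ∀ j, j ∈ B (ch j))

include hchI

lemma supp_sink : (canonF RedVertex.sink).support = [RedVertex.sink] :=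
  ParentTree.canon_support_root _ _ _ (redStep I ch hchI)

lemma supp_hubA : (canonF RedVertex.hubA).support = [RedVertex.hubA, RedVertex.sink] := by
  rw [ParentTree.canon_support_of_ne _ _ _ (redStep I ch hchI) (by simp)]
  simp only [redParent]
  rw [supp_sink hchI]

lemma supp_hubC : (canonF RedVertex.hubC).support = [RedVertex.hubC, RedVertex.sink] := by
  rw [ParentTree.canon_support_of_ne _ _ _ (redStep I ch hchI) (by simp)]
  simp only [redParent]
  rw [supp_sink hchI]

lemma supp_row (i : Fin k) :
    (canonF (RedVertex.row i)).support = [RedVertex.row i, RedVertex.hubA, RedVertex.sink] := by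
  rw [ParentTree.canon_support_of_ne _ _ _ (redStep I ch hchI) (by simp)]
  simp only [redParent]
  rw [supp_hubA hchI]

lemma supp_sub_mem {i : Fin k} (h : i ∈ I) :
    (canonF (RedVertex.sub i)).support = [RedVertex.sub i, RedVertex.hubC, RedVertex.sink] := by
  rw [ParentTree.canon_support_of_ne _ _ _ (redStep I ch hchI) (by simp)]
  simp only [redParent]
  rw [if_pos h]
  rw [supp_hubC hchI]

lemma supp_sub_not_mem {i : Fin k} (h : i ∉ I) :
    (canonF (RedVertex.sub i)).support
      = [RedVertex.sub i, RedVertex.row i, RedVertex.hubA, RedVertex.sink] := by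
  rw [ParentTree.canon_support_of_ne _ _ _ (redStep I ch hchI) (by simp)]
  simp only [redParent]
  rw [if_neg h]
  rw [supp_row hchI]

lemma supp_elt (j : Fin n) :
    (canonF (RedVertex.elt j)).support
      = [RedVertex.elt j, RedVertex.sub (ch j), RedVertex.hubC, RedVertex.sink] := by
  rw [ParentTree.canon_support_of_ne _ _ _ (redStep I ch hchI) (by simp)]
  simp only [redParent]
  rw [supp_sub_mem hchI (hchI j)]

lemma isDesc_iff (u x : RedVertex k n) :
    IsDesc Trev u x ↔ x ≠ u ∧ x ≠ RedVertex.sink ∧ u ∈ (canonF x).support := by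
  constructor
  · rintro ⟨h1, h2, h3⟩
    exact ⟨h1, h2, h3 ⟨_, ParentTree.canon_isPath _ _ _ (redStep I ch hchI) x⟩⟩
  · rintro ⟨h1, h2, h3⟩
    refine ⟨h1, h2, fun P => ?_⟩
    rw [ParentTree.canon_unique _ _ (redDepth I) (redStep I ch hchI) P.1 P.2]
    exact h3

lemma desc_elt (j' : Fin n) : descCount Trev (RedVertex.elt j') = 0 := by
  rw [descCount]
  convert Set.ncard_empty (RedVertex k n)
  ext x
  simp only [Set.mem_setOf_eq, Set.mem_empty_iff_false, iff_false]
  rw [isDesc_iff hchI]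
  rintro ⟨h1, h2, h3⟩
  cases x with
  | sink => exact h2 rfl
  | hubA => rw [supp_hubA hchI] at h3; simp at h3
  | hubC => rw [supp_hubC hchI] at h3; simp at h3
  | row i => rw [supp_row hchI] at h3; simp at h3
  | sub i =>
    by_cases h : i ∈ I
    · rw [supp_sub_mem hchI h] at h3; simp at h3
    · rw [supp_sub_not_mem hchI h] at h3; simp at h3
  | elt j => rw [supp_elt hchI] at h3; simp at h3; exact h1 (by rw [h3])

include hchB in
lemma desc_sub (i : Fin k) : descCount Trev (RedVertex.sub i) ≤ (B i).card := by
  classical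
  have hsub : {x | IsDesc Trev (RedVertex.sub i) x}
      ⊆ (((Finset.univ.filter fun j => ch j = i).image RedVertex.elt :
        Finset (RedVertex k n)) : Set (RedVertex k n)) := by
    intro x hx
    rw [Set.mem_setOf_eq, isDesc_iff hchI] at hx
    obtain ⟨h1, h2, h3⟩ := hx
    cases x with
    | sink => exact absurd rfl h2
    | hubA => rw [supp_hubA hchI] at h3; simp at h3
    | hubC => rw [supp_hubC hchI] at h3; simp at h3
    | row i' => rw [supp_row hchI] at h3; simp at h3
    | sub i' =>
      exfalso
      by_cases h : i' ∈ I
      · rw [supp_sub_mem hchI h] at h3; simp at h3; exact h1 (by rw [h3])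
      · rw [supp_sub_not_mem hchI h] at h3; simp at h3; exact h1 (by rw [h3])
    | elt j =>
      rw [supp_elt hchI] at h3
      simp at h3
      simp only [Finset.coe_image, Finset.coe_filter, Finset.mem_univ, true_and,
        Set.mem_image, Set.mem_setOf_eq]
      exact ⟨j, h3.symm, rfl⟩
  have := Set.ncard_le_ncard hsub (Set.toFinite _)
  rw [Set.ncard_coe_finset] at this
  refine le_trans this ?_
  rw [Finset.card_image_of_injective _ RedVertex.elt_injective]
  refine Finset.card_le_card ?_
  intro j hj
  simp only [Finset.mem_filter, Finset.mem_univ, true_and] at hj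
  have hb := hchB j
  rwa [hj] at hb

lemma desc_row (i : Fin k) : descCount Trev (RedVertex.row i) ≤ 1 := by
  have hsub : {x | IsDesc Trev (RedVertex.row i) x} ⊆ {RedVertex.sub i} := by
    intro x hx
    rw [Set.mem_setOf_eq, isDesc_iff hchI] at hx
    obtain ⟨h1, h2, h3⟩ := hx
    cases x with
    | sink => exact absurd rfl h2
    | hubA => rw [supp_hubA hchI] at h3; simp at h3
    | hubC => rw [supp_hubC hchI] at h3; simp at h3
    | row i' => rw [supp_row hchI] at h3; simp at h3; exact absurd (by rw [h3]) h1
    | sub i' =>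
      by_cases h : i' ∈ I
      · rw [supp_sub_mem hchI h] at h3; simp at h3
      · rw [supp_sub_not_mem hchI h] at h3
        simp at h3
        simp [h3]
    | elt j => rw [supp_elt hchI] at h3; simp at h3
  have := Set.ncard_le_ncard hsub (Set.toFinite _)
  rw [descCount]
  simpa using this

lemma desc_hubA (hpk : I.card ≤ k) :
    descCount Trev (RedVertex.hubA) ≤ k + (k - I.card) := by
  classical
  have hsub : {x | IsDesc Trev (RedVertex.hubA) x}
      ⊆ ((Finset.univ.image RedVertex.row ∪ (Finset.univ \ I).image RedVertex.sub :
        Finset (RedVertex k n)) : Set (RedVertex k n)) := by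
    intro x hx
    rw [Set.mem_setOf_eq, isDesc_iff hchI] at hx
    obtain ⟨h1, h2, h3⟩ := hx
    cases x with
    | sink => exact absurd rfl h2
    | hubA => exact absurd rfl h1
    | hubC => rw [supp_hubC hchI] at h3; simp at h3
    | row i' => simp
    | sub i' =>
      by_cases h : i' ∈ I
      · rw [supp_sub_mem hchI h] at h3; simp at h3
      · simp [h]
    | elt j => rw [supp_elt hchI] at h3; simp at h3
  have hle := Set.ncard_le_ncard hsub (Set.toFinite _)
  rw [Set.ncard_coe_finset] at hle
  rw [descCount]
  refine le_trans hle (le_trans (Finset.card_union_le _ _) ?_)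
  have h1 : (Finset.univ.image (RedVertex.row (k := k) (n := n))).card ≤ k := by
    refine le_trans (Finset.card_image_le) (by simp)
  have h2 : (((Finset.univ : Finset (Fin k)) \ I).image
      (RedVertex.sub (k := k) (n := n))).card ≤ k - I.card := by
    refine le_trans (Finset.card_image_le) ?_
    rw [Finset.card_sdiff_of_subset (Finset.subset_univ _)]
    simp
  omega

lemma desc_hubC : descCount Trev (RedVertex.hubC) ≤ I.card + n := by
  classical
  have hsub : {x | IsDesc Trev (RedVertex.hubC) x}
      ⊆ ((I.image RedVertex.sub ∪ Finset.univ.image RedVertex.elt :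
        Finset (RedVertex k n)) : Set (RedVertex k n)) := by
    intro x hx
    rw [Set.mem_setOf_eq, isDesc_iff hchI] at hx
    obtain ⟨h1, h2, h3⟩ := hx
    cases x with
    | sink => exact absurd rfl h2
    | hubA => rw [supp_hubA hchI] at h3; simp at h3
    | hubC => exact absurd rfl h1
    | row i' => rw [supp_row hchI] at h3; simp at h3
    | sub i' =>
      by_cases h : i' ∈ I
      · simp [h]
      · rw [supp_sub_not_mem hchI h] at h3; simp at h3
    | elt j => simp
  have hle := Set.ncard_le_ncard hsub (Set.toFinite _)
  rw [Set.ncard_coe_finset] at hle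
  rw [descCount]
  refine le_trans hle (le_trans (Finset.card_union_le _ _) ?_)
  have h1 : (I.image (RedVertex.sub (k := k) (n := n))).card ≤ I.card :=
    Finset.card_image_le
  have h2 : ((Finset.univ : Finset (Fin n)).image
      (RedVertex.elt (k := k) (n := n))).card ≤ n := by
    refine le_trans (Finset.card_image_le) (by simp)
  omega

end Reverse

/-- There exists a spanning tree `T` of `G_red` with lifetime at
least one iff the set-cover instance admits a cover by at most `p` of the subsets. -/
theorem stmt_0 {k n : ℕ} (hk : 1 ≤ k) (hn : 1 ≤ n)
    (B : Fin k → Finset (Fin n)) (hcov : ∀ j : Fin n, ∃ i : Fin k, j ∈ B i)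
    (p : ℕ) (hp1 : 1 ≤ p) (hpk : p ≤ k) (a : ℝ) (ha : 0 ≤ a) :
    (∃ T : SimpleGraph (RedVertex k n),
        T ≤ GRed B ∧ T.IsTree ∧ LifetimeGeOne B p a T) ↔
    (∃ I : Finset (Fin k), I.card ≤ p ∧ ∀ j : Fin n, ∃ i ∈ I, j ∈ B i) := by
  classical
  constructor
  · rintro ⟨T, hle, hT, hL⟩
    have huniq := hT.existsUnique_path
    -- element nodes have no descendants
    have helt0 : ∀ j : Fin n, descCount T (RedVertex.elt j) = 0 := by
      intro j
      have h := hL (RedVertex.elt j) (by simp)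
      simp only [energy] at h
      have h' : (descCount T (RedVertex.elt j) : ℝ) ≤ 0 := by linarith
      exact_mod_cast le_antisymm (by exact_mod_cast h') (Nat.zero_le _)
    have heltNoDesc : ∀ (j : Fin n) (x : RedVertex k n), ¬ IsDesc T (RedVertex.elt j) x := by
      intro j x hx
      have h0 := helt0 j
      rw [descCount, Set.ncard_eq_zero (Set.toFinite _)] at h0
      have hx' : x ∈ {x | IsDesc T (RedVertex.elt j) x} := hx
      rw [h0] at hx'
      exact hx'
    -- choose the parent subset node of each element node
    have hch : ∀ j : Fin n, ∃ i : Fin k, j ∈ B i ∧ T.Adj (RedVertex.elt j) (RedVertex.sub i) ∧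
        ∃ q : T.Walk (RedVertex.sub i) RedVertex.sink,
          q.IsPath ∧ RedVertex.elt j ∉ q.support := by
      intro j
      obtain ⟨P, hP, -⟩ := huniq (RedVertex.elt j) RedVertex.sink
      obtain ⟨v, hadj, q, hq⟩ := (SimpleGraph.Walk.not_nil_iff (p := P)).mp
        (SimpleGraph.Walk.not_nil_of_ne (by simp))
      rw [hq, SimpleGraph.Walk.cons_isPath_iff] at hP
      obtain ⟨i, rfl, hji⟩ := gred_adj_elt.mp (hle hadj)
      exact ⟨i, hji, hadj, q, hP.1, hP.2⟩
    choose ch hchB hchAdj q hq hnotin using hch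
    -- the walk from each element node
    have hWpath : ∀ j, (SimpleGraph.Walk.cons (hchAdj j) (q j)).IsPath := by
      intro j
      rw [SimpleGraph.Walk.cons_isPath_iff]
      exact ⟨hq j, hnotin j⟩
    -- every q j passes through hubC
    have hhubC : ∀ j : Fin n, RedVertex.hubC ∈ (q j).support := by
      intro j
      obtain ⟨v, hadj, r, hr⟩ := (SimpleGraph.Walk.not_nil_iff (p := q j)).mp
        (SimpleGraph.Walk.not_nil_of_ne (by simp))
      have hqj := hq j
      rw [hr, SimpleGraph.Walk.cons_isPath_iff] at hqj
      rcases gred_adj_sub (hle hadj) with hC | hRow | ⟨j', rfl, hj'⟩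
      · subst hC
        rw [hr, SimpleGraph.Walk.support_cons]
        exact List.mem_cons_of_mem _ (SimpleGraph.Walk.start_mem_support r)
      · -- parent of sub (ch j) is row (ch j): contradiction with energy of row
        exfalso
        subst hRow
        have hd1 : IsDesc T (RedVertex.row (ch j)) (RedVertex.sub (ch j)) := by
          refine ⟨by simp, by simp, fun P => ?_⟩
          rw [(huniq _ _).unique P.2 (hq j), hr, SimpleGraph.Walk.support_cons]
          exact List.mem_cons_of_mem _ (SimpleGraph.Walk.start_mem_support r)
        have hd2 : IsDesc T (RedVertex.row (ch j)) (RedVertex.elt j) := by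
          refine ⟨by simp, by simp, fun P => ?_⟩
          rw [(huniq _ _).unique P.2 (hWpath j), SimpleGraph.Walk.support_cons]
          refine List.mem_cons_of_mem _ ?_
          rw [hr, SimpleGraph.Walk.support_cons]
          exact List.mem_cons_of_mem _ (SimpleGraph.Walk.start_mem_support r)
        have hpair : ({RedVertex.sub (ch j), RedVertex.elt j} : Set (RedVertex k n))
            ⊆ {x | IsDesc T (RedVertex.row (ch j)) x} := by
          rintro x (rfl | rfl)
          · exact hd1
          · exact hd2
        have h2 : 2 ≤ descCount T (RedVertex.row (ch j)) := by
          rw [descCount]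
          have := Set.ncard_le_ncard hpair (Set.toFinite _)
          rwa [Set.ncard_pair (by simp)] at this
        have h := hL (RedVertex.row (ch j)) (by simp)
        simp only [energy] at h
        have : (descCount T (RedVertex.row (ch j)) : ℝ) ≤ 1 := by linarith
        have : descCount T (RedVertex.row (ch j)) ≤ 1 := by exact_mod_cast this
        omega
      · -- parent of sub (ch j) is an element node: that element has a descendant
        exfalso
        refine heltNoDesc j' (RedVertex.sub (ch j)) ⟨by simp, by simp, fun P => ?_⟩
        rw [(huniq _ _).unique P.2 (hq j), hr, SimpleGraph.Walk.support_cons]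
        exact List.mem_cons_of_mem _ (SimpleGraph.Walk.start_mem_support r)
    -- the cover
    refine ⟨Finset.univ.image ch, ?_, fun j =>
      ⟨ch j, Finset.mem_image_of_mem _ (Finset.mem_univ j), hchB j⟩⟩
    -- cardinality bound via descendants of hubC
    have hsub : (((Finset.univ.image ch).image RedVertex.sub ∪
          Finset.univ.image RedVertex.elt : Finset (RedVertex k n)) : Set (RedVertex k n))
        ⊆ {x | IsDesc T RedVertex.hubC x} := by
      intro x hx
      rw [Finset.coe_union, Set.mem_union] at hx
      rcases hx with hx | hx
      · rw [Finset.coe_image, Set.mem_image] at hx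
        obtain ⟨i, hi, rfl⟩ := hx
        rw [Finset.mem_coe, Finset.mem_image] at hi
        obtain ⟨j, -, rfl⟩ := hi
        refine ⟨by simp, by simp, fun P => ?_⟩
        rw [(huniq _ _).unique P.2 (hq j)]
        exact hhubC j
      · rw [Finset.coe_image, Set.mem_image] at hx
        obtain ⟨j, -, rfl⟩ := hx
        refine ⟨by simp, by simp, fun P => ?_⟩
        rw [(huniq _ _).unique P.2 (hWpath j), SimpleGraph.Walk.support_cons]
        exact List.mem_cons_of_mem _ (hhubC j)
    have hcard : ((Finset.univ.image ch).image RedVertex.sub ∪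
          Finset.univ.image RedVertex.elt : Finset (RedVertex k n)).card
        = (Finset.univ.image ch).card + n := by
      rw [Finset.card_union_of_disjoint, Finset.card_image_of_injective _ RedVertex.sub_injective,
        Finset.card_image_of_injective _ RedVertex.elt_injective, Finset.card_univ,
        Fintype.card_fin]
      rw [Finset.disjoint_left]
      rintro x hx1 hx2
      rw [Finset.mem_image] at hx1 hx2
      obtain ⟨i, -, rfl⟩ := hx1
      obtain ⟨j, -, hj⟩ := hx2
      cases hj
    have hle1 : (Finset.univ.image ch).card + n ≤ descCount T RedVertex.hubC := by
      rw [descCount, ← hcard, ← Set.ncard_coe_finset]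
      exact Set.ncard_le_ncard hsub (Set.toFinite _)
    have h := hL RedVertex.hubC (by simp)
    simp only [energy] at h
    have h2 : (descCount T RedVertex.hubC : ℝ) ≤ n + p := by linarith
    have h3 : descCount T RedVertex.hubC ≤ n + p := by exact_mod_cast h2
    omega
  · rintro ⟨I0, hI0card, hI0cov⟩
    obtain ⟨I, hI0I, hIcard⟩ := Finset.exists_superset_card_eq hI0card (by simpa using hpk)
    have hch : ∀ j : Fin n, ∃ i, i ∈ I ∧ j ∈ B i := by
      intro j
      obtain ⟨i, hi, hji⟩ := hI0cov j
      exact ⟨i, hI0I hi, hji⟩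
    choose ch hchI hchB using hch
    refine ⟨ParentTree.pT RedVertex.sink (redParent I ch), ?_, ?_, ?_⟩
    · intro x y hxy
      rcases (ParentTree.pT_adj _ _).mp hxy with ⟨hne, ⟨hxr, rfl⟩ | ⟨hyr, rfl⟩⟩
      · exact gred_parent hchB x hxr
      · exact (gred_parent hchB y hyr).symm
    · exact ParentTree.pT_isTree _ _ (redDepth I) (redStep I ch hchI)
    · intro u hu
      cases u with
      | sink => exact absurd rfl hu
      | hubA =>
        have h := desc_hubA hchI (by rw [hIcard]; exact hpk)
        rw [hIcard] at h
        simp only [energy]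
        have hcast : ((k + (k - p) : ℕ) : ℝ) = 2 * k - p := by
          push_cast [Nat.cast_sub hpk]
          ring
        have h2 : (descCount (ParentTree.pT RedVertex.sink (redParent I ch))
            RedVertex.hubA : ℝ) ≤ 2 * k - p := by
          rw [← hcast]
          exact_mod_cast h
        linarith
      | hubC =>
        have h := desc_hubC hchI
        rw [hIcard] at h
        simp only [energy]
        have h2 : (descCount (ParentTree.pT RedVertex.sink (redParent I ch))
            RedVertex.hubC : ℝ) ≤ p + n := by exact_mod_cast h
        linarith
      | row i =>
        have h := desc_row hchI i
        simp only [energy]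
        have h2 : (descCount (ParentTree.pT RedVertex.sink (redParent I ch))
            (RedVertex.row i) : ℝ) ≤ 1 := by exact_mod_cast h
        linarith
      | sub i =>
        have h := desc_sub hchI hchB i
        simp only [energy]
        have h2 : (descCount (ParentTree.pT RedVertex.sink (redParent I ch))
            (RedVertex.sub i) : ℝ) ≤ (B i).card := by exact_mod_cast h
        linarith
      | elt j =>
        have h := desc_elt hchI j
        simp only [energy]
        rw [h]
        norm_num
end

section
/- Suppose I ⊆ {1,…,k} satisfies |I| = p and ⋃_{i∈I} B_i = U, and choose for each j ∈ U an index φ(j) ∈ I with j ∈ B_{φ(j)}. Then the edge set consisting of v0–A, v0–C, the edges C–s_i for all i ∈ I, the edges s_{φ(j)}–w_j for all j ∈ U, the edges A–r_i for all i ∈ {1,…,k}, and the edges r_i–s_i for all i ∉ I, forms a spanning tree of G_red with lifetime at least one. -/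
open SimpleGraph

/-- The explicit edge set of Statement 1, as a graph: edges `v0–A`, `v0–C`,
`C–s_i` for `i ∈ I`, `s_{φ(j)}–w_j` for every `j`, `A–r_i` for every `i`,
and `r_i–s_i` for `i ∉ I`. -/
def coverTreeRel {k n : ℕ} (I : Finset (Fin k)) (φ : Fin n → Fin k) :
    RedVertex k n → RedVertex k n → Prop
  | .sink, .hubA => True
  | .sink, .hubC => True
  | .hubC, .sub i => i ∈ I
  | .sub i, .elt j => i = φ j
  | .hubA, .row _ => True
  | .row i, .sub i' => i = i' ∧ i ∉ I
  | _, _ => False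

def coverTree {k n : ℕ} (I : Finset (Fin k)) (φ : Fin n → Fin k) :
    SimpleGraph (RedVertex k n) :=
  SimpleGraph.fromRel (coverTreeRel I φ)

namespace Stmt1Aux

open SimpleGraph

variable {k n : ℕ}

/-- Parent map of the cover tree. -/
def par (I : Finset (Fin k)) (φ : Fin n → Fin k) : RedVertex k n → RedVertex k n
  | .sink => .sink
  | .hubA => .sink
  | .hubC => .sink
  | .row _ => .hubA
  | .sub i => if i ∈ I then .hubC else .row i
  | .elt j => .sub (φ j)

/-- Height of a vertex. -/
def hgt (I : Finset (Fin k)) : RedVertex k n → ℕ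
  | .sink => 0
  | .hubA => 1
  | .hubC => 1
  | .row _ => 2
  | .sub i => if i ∈ I then 2 else 3
  | .elt _ => 3

lemma par_sink (I : Finset (Fin k)) (φ : Fin n → Fin k) :
    par I φ (RedVertex.sink) = RedVertex.sink := rfl

lemma hgt_par_lt (I : Finset (Fin k)) (φ : Fin n → Fin k) (hφI : ∀ j, φ j ∈ I)
    {v : RedVertex k n} (hv : v ≠ RedVertex.sink) : hgt I (par I φ v) < hgt I v := by
  cases v with
  | sink => exact absurd rfl hv
  | hubA => simp [par, hgt]
  | hubC => simp [par, hgt]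
  | row i => simp [par, hgt]
  | sub i => by_cases h : i ∈ I <;> simp [par, hgt, h]
  | elt j => simp [par, hgt, hφI j]

lemma adj_iff (I : Finset (Fin k)) (φ : Fin n → Fin k) (a b : RedVertex k n) :
    (coverTree I φ).Adj a b ↔
      (a ≠ RedVertex.sink ∧ par I φ a = b) ∨ (b ≠ RedVertex.sink ∧ par I φ b = a) := by
  cases a <;> cases b <;>
    simp only [coverTree, fromRel_adj, coverTreeRel, par, ne_eq] <;>
    (try (split_ifs <;> simp_all)) <;> aesop

lemma adj_par (I : Finset (Fin k)) (φ : Fin n → Fin k) {v : RedVertex k n}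
    (hv : v ≠ RedVertex.sink) : (coverTree I φ).Adj v (par I φ v) :=
  (adj_iff I φ v _).mpr (Or.inl ⟨hv, rfl⟩)



/-- Canonical walk from a vertex to the sink along the parent map. -/
def canonWalk (I : Finset (Fin k)) (φ : Fin n → Fin k) (hφI : ∀ j, φ j ∈ I)
    (v : RedVertex k n) : (coverTree I φ).Walk v RedVertex.sink :=
  if h : v = RedVertex.sink then SimpleGraph.Walk.nil.copy h.symm rfl
  else SimpleGraph.Walk.cons (adj_par I φ h) (canonWalk I φ hφI (par I φ v))
  termination_by hgt I v
  decreasing_by exact hgt_par_lt I φ hφI h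

variable (I : Finset (Fin k)) (φ : Fin n → Fin k)

lemma canonWalk_support_sink (hφI : ∀ j, φ j ∈ I) :
    (canonWalk I φ hφI RedVertex.sink).support = [RedVertex.sink] := by
  rw [canonWalk]; simp

lemma canonWalk_support_of_ne (hφI : ∀ j, φ j ∈ I) {v : RedVertex k n} (hv : v ≠ RedVertex.sink) :
    (canonWalk I φ hφI v).support = v :: (canonWalk I φ hφI (par I φ v)).support := by
  rw [canonWalk]; simp [hv]

lemma canonWalk_support_hubA (hφI : ∀ j, φ j ∈ I) :
    (canonWalk I φ hφI RedVertex.hubA).support = [RedVertex.hubA, RedVertex.sink] := by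
  rw [canonWalk_support_of_ne I φ hφI (by simp)]
  simp [par, canonWalk_support_sink]

lemma canonWalk_support_hubC (hφI : ∀ j, φ j ∈ I) :
    (canonWalk I φ hφI RedVertex.hubC).support = [RedVertex.hubC, RedVertex.sink] := by
  rw [canonWalk_support_of_ne I φ hφI (by simp)]
  simp [par, canonWalk_support_sink]

lemma canonWalk_support_row (hφI : ∀ j, φ j ∈ I) (i : Fin k) :
    (canonWalk I φ hφI (RedVertex.row i)).support
      = [RedVertex.row i, RedVertex.hubA, RedVertex.sink] := by
  rw [canonWalk_support_of_ne I φ hφI (by simp)]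
  simp [par, canonWalk_support_hubA]

lemma canonWalk_support_sub_mem (hφI : ∀ j, φ j ∈ I) (i : Fin k) (hi : i ∈ I) :
    (canonWalk I φ hφI (RedVertex.sub i)).support
      = [RedVertex.sub i, RedVertex.hubC, RedVertex.sink] := by
  rw [canonWalk_support_of_ne I φ hφI (by simp)]
  simp only [par]
  rw [if_pos hi, canonWalk_support_hubC]

lemma canonWalk_support_sub_not (hφI : ∀ j, φ j ∈ I) (i : Fin k) (hi : i ∉ I) :
    (canonWalk I φ hφI (RedVertex.sub i)).support
      = [RedVertex.sub i, RedVertex.row i, RedVertex.hubA, RedVertex.sink] := by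
  rw [canonWalk_support_of_ne I φ hφI (by simp)]
  simp only [par]
  rw [if_neg hi, canonWalk_support_row]

lemma canonWalk_support_elt (hφI : ∀ j, φ j ∈ I) (j : Fin n) :
    (canonWalk I φ hφI (RedVertex.elt j)).support
      = [RedVertex.elt j, RedVertex.sub (φ j), RedVertex.hubC, RedVertex.sink] := by
  rw [canonWalk_support_of_ne I φ hφI (by simp)]
  simp [par, canonWalk_support_sub_mem I φ hφI (φ j) (hφI j)]

lemma canonWalk_edges_mem (hφI : ∀ j, φ j ∈ I) :
    ∀ v : RedVertex k n, ∀ e ∈ (canonWalk I φ hφI v).edges,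
      ∃ x, x ≠ RedVertex.sink ∧ e = s(x, par I φ x) ∧ hgt I x ≤ hgt I v := by
  intro v e he
  by_cases h : v = RedVertex.sink
  · subst h; rw [canonWalk] at he; simp at he
  · rw [canonWalk] at he
    simp only [h, dite_false, SimpleGraph.Walk.edges_cons, List.mem_cons] at he
    rcases he with rfl | he
    · exact ⟨v, h, rfl, le_refl _⟩
    · obtain ⟨x, hx, rfl, hle⟩ := canonWalk_edges_mem hφI (par I φ v) e he
      exact ⟨x, hx, rfl, hle.trans (hgt_par_lt I φ hφI h).le⟩
  termination_by v => hgt I v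
  decreasing_by exact hgt_par_lt I φ hφI h

lemma edge_mem_walk_aux :
    ∀ {x y : RedVertex k n} (W : (coverTree I φ).Walk x y), y = RedVertex.sink →
      ∀ m : ℕ, (par I φ)^[m] x ≠ RedVertex.sink →
      s((par I φ)^[m] x, (par I φ)^[m+1] x) ∈ W.edges := by
  intro x y W
  induction W with
  | nil =>
    rintro rfl m hm
    exact absurd (Function.iterate_fixed (par_sink I φ) m) hm
  | @cons x y _ h W ih =>
    intro hy m hm
    rcases (adj_iff I φ x y).mp h with ⟨hx, hpar⟩ | ⟨hy', hpar⟩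
    · subst hpar
      cases m with
      | zero => simp [SimpleGraph.Walk.edges_cons]
      | succ m' =>
        rw [SimpleGraph.Walk.edges_cons]
        refine List.mem_cons_of_mem _ ?_
        have hm' : (par I φ)^[m'] (par I φ x) ≠ RedVertex.sink := by
          rwa [← Function.iterate_succ_apply]
        have hres := ih hy m' hm'
        rwa [← Function.iterate_succ_apply, ← Function.iterate_succ_apply] at hres
    · subst hpar
      rw [← Function.iterate_succ_apply] at hm ⊢
      rw [← Function.iterate_succ_apply]
      rw [SimpleGraph.Walk.edges_cons, List.mem_cons]
      exact Or.inr (ih hy (m + 1) hm)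

lemma edge_mem_walk {x : RedVertex k n} (W : (coverTree I φ).Walk x RedVertex.sink)
    (hx : x ≠ RedVertex.sink) : s(x, par I φ x) ∈ W.edges := by
  have := edge_mem_walk_aux I φ W rfl 0 (by simpa using hx)
  simpa using this

lemma connected (hφI : ∀ j, φ j ∈ I) : (coverTree I φ).Connected := by
  have : Nonempty (RedVertex k n) := ⟨RedVertex.sink⟩
  exact SimpleGraph.Connected.mk
    (fun u v => (canonWalk I φ hφI u).reachable.trans (canonWalk I φ hφI v).reachable.symm)

lemma isBridge_par (hφI : ∀ j, φ j ∈ I) {u : RedVertex k n} (hu : u ≠ RedVertex.sink) :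
    (coverTree I φ).IsBridge s(u, par I φ u) := by
  rw [SimpleGraph.isBridge_iff, SimpleGraph.reachable_delete_edges_iff_exists_walk]
  rintro ⟨W, hW⟩
  apply hW
  have hmem := edge_mem_walk I φ (W.append (canonWalk I φ hφI (par I φ u))) hu
  rw [SimpleGraph.Walk.edges_append, List.mem_append] at hmem
  rcases hmem with hmem | hmem
  · exact hmem
  · obtain ⟨x, hx, hedge, hle⟩ := canonWalk_edges_mem I φ hφI _ _ hmem
    rw [Sym2.eq_iff] at hedge
    have h1 := hgt_par_lt I φ hφI hu
    have h2 := hgt_par_lt I φ hφI hx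
    rcases hedge with ⟨h3, _⟩ | ⟨h3, h4⟩
    · subst h3; omega
    · have e1 := congrArg (hgt I) h3
      have e2 := congrArg (hgt I) h4
      omega

lemma isAcyclic (hφI : ∀ j, φ j ∈ I) : (coverTree I φ).IsAcyclic := by
  rw [SimpleGraph.isAcyclic_iff_forall_adj_isBridge]
  intro v w hadj
  rcases (adj_iff I φ v w).mp hadj with ⟨hv, hpar⟩ | ⟨hw, hpar⟩
  · rw [← hpar]; exact isBridge_par I φ hφI hv
  · rw [← hpar, Sym2.eq_swap]; exact isBridge_par I φ hφI hw

lemma isTree (hφI : ∀ j, φ j ∈ I) : (coverTree I φ).IsTree :=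
  ⟨connected I φ hφI, isAcyclic I φ hφI⟩


lemma descCount_le_card (hφI : ∀ j, φ j ∈ I) (u : RedVertex k n) (S : Finset (RedVertex k n))
    (hS : ∀ x, x ≠ u → u ∈ (canonWalk I φ hφI x).support → x ∈ S) :
    descCount (coverTree I φ) u ≤ S.card := by
  have hsub : {x | IsDesc (coverTree I φ) u x} ⊆ ↑S := by
    rintro x ⟨hxu, hxs, hall⟩
    have h1 := hall (canonWalk I φ hφI x).toPath
    have h2 : u ∈ (canonWalk I φ hφI x).support :=
      SimpleGraph.Walk.support_toPath_subset _ h1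
    exact hS x hxu h2
  have := Set.ncard_le_ncard hsub S.finite_toSet
  rwa [Set.ncard_coe_finset] at this

lemma row_injective : Function.Injective (RedVertex.row : Fin k → RedVertex k n) :=
  fun a b h => by simpa using h

lemma sub_injective : Function.Injective (RedVertex.sub : Fin k → RedVertex k n) :=
  fun a b h => by simpa using h

lemma elt_injective : Function.Injective (RedVertex.elt : Fin n → RedVertex k n) :=
  fun a b h => by simpa using h

lemma descCount_hubA (hφI : ∀ j, φ j ∈ I) :
    descCount (coverTree I φ) RedVertex.hubA ≤ k + (k - I.card) := by
  have h := descCount_le_card I φ hφI RedVertex.hubA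
    ((Finset.univ.image RedVertex.row : Finset (RedVertex k n)) ∪ Iᶜ.image RedVertex.sub) ?_
  · refine h.trans (le_of_eq ?_)
    rw [Finset.card_union_of_disjoint, Finset.card_image_of_injective _ row_injective,
      Finset.card_image_of_injective _ sub_injective, Finset.card_univ, Fintype.card_fin,
      Finset.card_compl, Fintype.card_fin]
    · simp [Finset.disjoint_left]
  · intro x hxu hmem
    cases x with
    | sink => rw [canonWalk_support_sink] at hmem; simp at hmem
    | hubA => exact absurd rfl hxu
    | hubC => rw [canonWalk_support_hubC] at hmem; simp at hmem
    | row i => exact Finset.mem_union_left _ (Finset.mem_image_of_mem _ (Finset.mem_univ i))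
    | sub i =>
      by_cases hi : i ∈ I
      · rw [canonWalk_support_sub_mem I φ hφI i hi] at hmem; simp at hmem
      · exact Finset.mem_union_right _
          (Finset.mem_image_of_mem _ (Finset.mem_compl.mpr hi))
    | elt j => rw [canonWalk_support_elt] at hmem; simp at hmem

lemma descCount_hubC (hφI : ∀ j, φ j ∈ I) :
    descCount (coverTree I φ) RedVertex.hubC ≤ I.card + n := by
  have h := descCount_le_card I φ hφI RedVertex.hubC
    (I.image RedVertex.sub ∪ (Finset.univ.image RedVertex.elt : Finset (RedVertex k n))) ?_
  · refine h.trans (le_of_eq ?_)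
    rw [Finset.card_union_of_disjoint, Finset.card_image_of_injective _ sub_injective,
      Finset.card_image_of_injective _ elt_injective, Finset.card_univ, Fintype.card_fin]
    · simp [Finset.disjoint_left]
  · intro x hxu hmem
    cases x with
    | sink => rw [canonWalk_support_sink] at hmem; simp at hmem
    | hubA => rw [canonWalk_support_hubA] at hmem; simp at hmem
    | hubC => exact absurd rfl hxu
    | row i => rw [canonWalk_support_row] at hmem; simp at hmem
    | sub i =>
      by_cases hi : i ∈ I
      · exact Finset.mem_union_left _ (Finset.mem_image_of_mem _ hi)
      · rw [canonWalk_support_sub_not I φ hφI i hi] at hmem; simp at hmem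
    | elt j => exact Finset.mem_union_right _ (Finset.mem_image_of_mem _ (Finset.mem_univ j))

lemma descCount_row (hφI : ∀ j, φ j ∈ I) (i : Fin k) :
    descCount (coverTree I φ) (RedVertex.row i) ≤ 1 := by
  have h := descCount_le_card I φ hφI (RedVertex.row i) {RedVertex.sub i} ?_
  · simpa using h
  · intro x hxu hmem
    cases x with
    | sink => rw [canonWalk_support_sink] at hmem; simp at hmem
    | hubA => rw [canonWalk_support_hubA] at hmem; simp at hmem
    | hubC => rw [canonWalk_support_hubC] at hmem; simp at hmem
    | row i' =>
      rw [canonWalk_support_row] at hmem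
      simp only [List.mem_cons, List.not_mem_nil, or_false] at hmem
      rcases hmem with hmem | hmem | hmem <;> simp_all
    | sub i' =>
      by_cases hi : i' ∈ I
      · rw [canonWalk_support_sub_mem I φ hφI i' hi] at hmem; simp at hmem
      · rw [canonWalk_support_sub_not I φ hφI i' hi] at hmem
        simp only [List.mem_cons, List.not_mem_nil, or_false] at hmem
        rcases hmem with hmem | hmem | hmem | hmem <;> simp_all
    | elt j => rw [canonWalk_support_elt] at hmem; simp at hmem

lemma descCount_sub (B0 : Fin k → Finset (Fin n)) (hφI : ∀ j, φ j ∈ I) (hφB : ∀ j, j ∈ B0 (φ j)) (i : Fin k) :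
    descCount (coverTree I φ) (RedVertex.sub i) ≤ (B0 i).card := by
  have h := descCount_le_card I φ hφI (RedVertex.sub i)
    ((Finset.univ.filter (fun j => φ j = i)).image RedVertex.elt) ?_
  · refine h.trans ?_
    rw [Finset.card_image_of_injective _ elt_injective]
    refine Finset.card_le_card ?_
    intro j hj
    rw [Finset.mem_filter] at hj
    have := hφB j
    rwa [hj.2] at this
  · intro x hxu hmem
    cases x with
    | sink => rw [canonWalk_support_sink] at hmem; simp at hmem
    | hubA => rw [canonWalk_support_hubA] at hmem; simp at hmem
    | hubC => rw [canonWalk_support_hubC] at hmem; simp at hmem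
    | row i' => rw [canonWalk_support_row] at hmem; simp at hmem
    | sub i' =>
      by_cases hi : i' ∈ I
      · rw [canonWalk_support_sub_mem I φ hφI i' hi] at hmem
        simp only [List.mem_cons, List.not_mem_nil, or_false] at hmem
        rcases hmem with hmem | hmem | hmem <;> simp_all
      · rw [canonWalk_support_sub_not I φ hφI i' hi] at hmem
        simp only [List.mem_cons, List.not_mem_nil, or_false] at hmem
        rcases hmem with hmem | hmem | hmem | hmem <;> simp_all
    | elt j =>
      rw [canonWalk_support_elt] at hmem
      simp only [List.mem_cons, List.not_mem_nil, or_false] at hmem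
      rcases hmem with hmem | hmem | hmem | hmem
      · simp at hmem
      · simp only [RedVertex.sub.injEq] at hmem
        subst hmem
        exact Finset.mem_image_of_mem _ (Finset.mem_filter.mpr ⟨Finset.mem_univ j, rfl⟩)
      · simp at hmem
      · simp at hmem

lemma descCount_elt (hφI : ∀ j, φ j ∈ I) (j : Fin n) :
    descCount (coverTree I φ) (RedVertex.elt j) ≤ 0 := by
  have h := descCount_le_card I φ hφI (RedVertex.elt j) ∅ ?_
  · simpa using h
  · intro x hxu hmem
    cases x with
    | sink => rw [canonWalk_support_sink] at hmem; simp at hmem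
    | hubA => rw [canonWalk_support_hubA] at hmem; simp at hmem
    | hubC => rw [canonWalk_support_hubC] at hmem; simp at hmem
    | row i' => rw [canonWalk_support_row] at hmem; simp at hmem
    | sub i' =>
      by_cases hi : i' ∈ I
      · rw [canonWalk_support_sub_mem I φ hφI i' hi] at hmem; simp at hmem
      · rw [canonWalk_support_sub_not I φ hφI i' hi] at hmem; simp at hmem
    | elt j' =>
      rw [canonWalk_support_elt] at hmem
      simp only [List.mem_cons, List.not_mem_nil, or_false] at hmem
      rcases hmem with hmem | hmem | hmem | hmem <;> simp_all

lemma rel_le (B0 : Fin k → Finset (Fin n)) (hφB : ∀ j, j ∈ B0 (φ j))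
    (a b : RedVertex k n) (h : coverTreeRel I φ a b) : redRel B0 a b := by
  cases a <;> cases b <;>
    first
      | exact h.elim
      | trivial
      | (exact h.1)
      | (have h' : _ = φ _ := h; subst h'; exact hφB _)

end Stmt1Aux
open Stmt1Aux in
/-- If `I` is a set cover of size `p` and `φ` picks, for each element `j`,
a set index `φ(j) ∈ I` with `j ∈ B_{φ(j)}`, then the explicit edge set above forms a
spanning tree of `G_red` with lifetime at least one. -/
theorem stmt_1 {k n : ℕ} (hk : 1 ≤ k) (hn : 1 ≤ n)
    (B : Fin k → Finset (Fin n)) (hcov : ∀ j : Fin n, ∃ i : Fin k, j ∈ B i)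
    (p : ℕ) (hp1 : 1 ≤ p) (hpk : p ≤ k) (a : ℝ) (ha : 0 ≤ a)
    (I : Finset (Fin k)) (hIcard : I.card = p)
    (hIcov : ∀ j : Fin n, ∃ i ∈ I, j ∈ B i)
    (φ : Fin n → Fin k) (hφI : ∀ j : Fin n, φ j ∈ I) (hφB : ∀ j : Fin n, j ∈ B (φ j)) :
    coverTree I φ ≤ GRed B ∧ (coverTree I φ).IsTree ∧
      LifetimeGeOne B p a (coverTree I φ) := by
  refine ⟨?_, isTree I φ hφI, ?_⟩
  · intro v w hvw
    rw [coverTree, SimpleGraph.fromRel_adj] at hvw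
    rw [GRed, SimpleGraph.fromRel_adj]
    exact ⟨hvw.1, hvw.2.imp (rel_le I φ B hφB _ _) (rel_le I φ B hφB _ _)⟩
  · intro u hu
    cases u with
    | sink => exact absurd rfl hu
    | hubA =>
      have h := descCount_hubA I φ hφI
      have hcast := (Nat.cast_le (α := ℝ)).mpr h
      have hc : ((k + (k - I.card) : ℕ) : ℝ) = 2 * (k : ℝ) - p := by
        rw [hIcard, Nat.cast_add, Nat.cast_sub hpk]; ring
      rw [hc] at hcast
      simp only [energy]
      linarith
    | hubC =>
      have h := descCount_hubC I φ hφI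
      rw [hIcard] at h
      have hcast := (Nat.cast_le (α := ℝ)).mpr h
      push_cast at hcast
      simp only [energy]
      linarith
    | row i =>
      have h := descCount_row I φ hφI i
      have hcast := (Nat.cast_le (α := ℝ)).mpr h
      simp only [energy]
      push_cast at hcast
      linarith
    | sub i =>
      have h := descCount_sub I φ B hφI hφB i
      have hcast := (Nat.cast_le (α := ℝ)).mpr h
      simp only [energy]
      linarith
    | elt j =>
      have h := descCount_elt I φ hφI j
      have hcast := (Nat.cast_le (α := ℝ)).mpr h
      simp only [energy]
      push_cast at hcast
      linarith
end

section
/- Let T be a spanning tree of the reduction graph G_red with lifetime at least one, and let I = { i ∈ {1,…,k} : s_i is the T-parent of some element node w_j }. Then |I| ≤ p and ⋃_{i∈I} B_i = U; in particular, the set cover instance admits a cover by at most p of the given subsets. -/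
open SimpleGraph

namespace StmtAux

def toSum {k n : ℕ} : RedVertex k n → Fin 3 ⊕ (Fin k ⊕ Fin k ⊕ Fin n)
  | .sink => .inl 0
  | .hubA => .inl 1
  | .hubC => .inl 2
  | .row i => .inr (.inl i)
  | .sub i => .inr (.inr (.inl i))
  | .elt j => .inr (.inr (.inr j))

instance {k n : ℕ} : Finite (RedVertex k n) :=
  Finite.of_injective toSum (by
    intro x y h
    cases x <;> cases y <;> simp [toSum] at h <;> simp [h])

variable {k n : ℕ} {B : Fin k → Finset (Fin n)} {T : SimpleGraph (RedVertex k n)}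

lemma exists_parent (htree : T.IsTree) (x : RedVertex k n) (hx : x ≠ .sink) :
    ∃ v, IsParent T x v := by
  obtain ⟨w⟩ := htree.isConnected.preconnected x RedVertex.sink
  set pp : T.Path x RedVertex.sink := w.toPath with hpp
  obtain ⟨v, hadj, q, hq⟩ := Walk.exists_eq_cons_of_ne hx pp.1
  refine ⟨v, hadj, fun r => ?_⟩
  have := htree.IsAcyclic.path_unique r pp
  rw [this, hq, Walk.support_cons]
  exact List.mem_cons_of_mem _ q.start_mem_support

lemma isDesc_of_parent {x v : RedVertex k n} (h : IsParent T x v) (hx : x ≠ .sink) :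
    IsDesc T v x :=
  ⟨h.1.ne, hx, h.2⟩

lemma parent_trans {x v u : RedVertex k n}
    (h1 : ∀ q : T.Path x .sink, v ∈ q.1.support)
    (h2 : ∀ q : T.Path v .sink, u ∈ q.1.support) :
    ∀ q : T.Path x .sink, u ∈ q.1.support := by
  intro q
  have hv := h1 q
  exact Walk.support_dropUntil_subset _ hv (h2 ⟨q.1.dropUntil v hv, q.2.dropUntil hv⟩)

lemma elt_parent (hsub : T ≤ GRed B) {j : Fin n} {v : RedVertex k n}
    (h : T.Adj (RedVertex.elt j) v) : ∃ i, v = RedVertex.sub i ∧ j ∈ B i := by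
  have hadj := hsub h
  rw [GRed, fromRel_adj] at hadj
  obtain ⟨-, h1 | h1⟩ := hadj <;> cases v <;> simp [redRel] at h1
  exact ⟨_, rfl, h1⟩

lemma sub_adj (hsub : T ≤ GRed B) {i : Fin k} {v : RedVertex k n}
    (h : T.Adj (RedVertex.sub i) v) :
    v = RedVertex.hubC ∨ v = RedVertex.row i ∨ ∃ j, v = RedVertex.elt j := by
  have hadj := hsub h
  rw [GRed, fromRel_adj] at hadj
  obtain ⟨-, h1 | h1⟩ := hadj <;> cases v <;> simp [redRel] at h1
  · exact Or.inr (Or.inr ⟨_, rfl⟩)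
  · exact Or.inl rfl
  · exact Or.inr (Or.inl (by rw [h1]))

end StmtAux

namespace StmtAux

variable {k n : ℕ} {B : Fin k → Finset (Fin n)} {T : SimpleGraph (RedVertex k n)}
  {p : ℕ} {a : ℝ}

lemma not_isDesc_elt (hlife : LifetimeGeOne B p a T) (j : Fin n) (x : RedVertex k n) :
    ¬ IsDesc T (RedVertex.elt j) x := by
  intro hx
  have h := hlife (.elt j) (by intro h; cases h)
  simp only [energy] at h
  have h0 : 0 < descCount T (RedVertex.elt j) :=
    (Set.ncard_pos (Set.toFinite _)).mpr ⟨x, hx⟩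
  have h0' : (0 : ℝ) < descCount T (RedVertex.elt j) := by exact_mod_cast h0
  linarith

lemma desc_row_le_one (hlife : LifetimeGeOne B p a T) (i : Fin k) :
    descCount T (RedVertex.row i) ≤ 1 := by
  have h := hlife (.row i) (by intro h; cases h)
  simp only [energy] at h
  have : (descCount T (RedVertex.row i) : ℝ) ≤ 1 := by linarith
  exact_mod_cast this

lemma desc_hubC_le (hlife : LifetimeGeOne B p a T) :
    descCount T RedVertex.hubC ≤ n + p := by
  have h := hlife .hubC (by intro h; cases h)
  simp only [energy] at h
  have : (descCount T RedVertex.hubC : ℝ) ≤ (n : ℝ) + p := by linarith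
  exact_mod_cast this

lemma sub_parent_hubC (htree : T.IsTree) (hsub : T ≤ GRed B)
    (hlife : LifetimeGeOne B p a T) {i : Fin k} {j : Fin n}
    (hj : IsParent T (RedVertex.elt j) (RedVertex.sub i)) :
    IsParent T (RedVertex.sub i) RedVertex.hubC := by
  obtain ⟨v, hv⟩ := exists_parent htree (.sub i) (by intro h; cases h)
  rcases sub_adj hsub hv.1 with rfl | rfl | ⟨j', rfl⟩
  · exact hv
  · exfalso
    have d1 : IsDesc T (RedVertex.row i) (RedVertex.sub i) := isDesc_of_parent hv (by intro h; cases h)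
    have d2 : IsDesc T (RedVertex.row i) (RedVertex.elt j) := by
      refine ⟨?_, ?_, ?_⟩
      · intro h; cases h
      · intro h; cases h
      · exact parent_trans hj.2 hv.2
    have hss : ({RedVertex.sub i, RedVertex.elt j} : Set (RedVertex k n)) ⊆
        {x | IsDesc T (RedVertex.row i) x} := by
      rintro x (rfl | rfl) <;> assumption
    have h2 : 2 ≤ descCount T (RedVertex.row i) := by
      have h := Set.ncard_le_ncard hss (Set.toFinite _)
      rwa [Set.ncard_pair (by intro h; cases h)] at h
    have := desc_row_le_one hlife i
    omega
  · exact absurd (isDesc_of_parent hv (by intro h; cases h)) (not_isDesc_elt hlife j' _)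

end StmtAux

/-- If `T` is a spanning tree of `G_red` with lifetime at least one,
then the set `I` of indices `i` such that `s_i` is the `T`-parent of some element node
satisfies `|I| ≤ p` and `⋃_{i ∈ I} B_i = U`. -/
theorem stmt_2 {k n : ℕ} (hk : 1 ≤ k) (hn : 1 ≤ n)
    (B : Fin k → Finset (Fin n)) (hcov : ∀ j : Fin n, ∃ i : Fin k, j ∈ B i)
    (p : ℕ) (hp1 : 1 ≤ p) (hpk : p ≤ k) (a : ℝ) (ha : 0 ≤ a)
    (T : SimpleGraph (RedVertex k n)) (hsub : T ≤ GRed B) (htree : T.IsTree)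
    (hlife : LifetimeGeOne B p a T) :
    {i : Fin k | ∃ j : Fin n, IsParent T (RedVertex.elt j) (RedVertex.sub i)}.ncard ≤ p ∧
    ∀ j : Fin n, ∃ i ∈ {i : Fin k | ∃ j' : Fin n,
        IsParent T (RedVertex.elt j') (RedVertex.sub i)}, j ∈ B i := by
  classical
  have hcov2 : ∀ j : Fin n,
      ∃ i ∈ {i : Fin k | ∃ j' : Fin n, IsParent T (RedVertex.elt j') (RedVertex.sub i)},
        j ∈ B i := by
    intro j
    obtain ⟨v, hv⟩ := StmtAux.exists_parent htree (.elt j) (by intro h; cases h)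
    obtain ⟨i, rfl, hji⟩ := StmtAux.elt_parent hsub hv.1
    exact ⟨i, ⟨j, hv⟩, hji⟩
  refine ⟨?_, hcov2⟩
  set I : Set (Fin k) :=
    {i : Fin k | ∃ j : Fin n, IsParent T (RedVertex.elt j) (RedVertex.sub i)} with hI
  have hCsub : ∀ i ∈ I, IsDesc T RedVertex.hubC (RedVertex.sub i) := by
    rintro i ⟨j, hj⟩
    exact StmtAux.isDesc_of_parent (StmtAux.sub_parent_hubC htree hsub hlife hj)
      (by intro h; cases h)
  have hCelt : ∀ j : Fin n, IsDesc T RedVertex.hubC (RedVertex.elt j) := by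
    intro j
    obtain ⟨v, hv⟩ := StmtAux.exists_parent htree (.elt j) (by intro h; cases h)
    obtain ⟨i, rfl, hji⟩ := StmtAux.elt_parent hsub hv.1
    have hC := StmtAux.sub_parent_hubC htree hsub hlife hv
    refine ⟨?_, ?_, ?_⟩
    · intro h; cases h
    · intro h; cases h
    · exact StmtAux.parent_trans hv.2 hC.2
  have hsubset : (RedVertex.sub '' I ∪ RedVertex.elt '' Set.univ : Set (RedVertex k n))
      ⊆ {x | IsDesc T RedVertex.hubC x} := by
    rintro x (⟨i, hi, rfl⟩ | ⟨j, -, rfl⟩)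
    · exact hCsub i hi
    · exact hCelt j
  have hdisj : Disjoint (RedVertex.sub '' I)
      (RedVertex.elt '' (Set.univ : Set (Fin n))) := by
    rw [Set.disjoint_left]
    rintro x ⟨i, -, rfl⟩ ⟨j, -, h⟩
    cases h
  have hcard := Set.ncard_le_ncard hsubset (Set.toFinite _)
  rw [Set.ncard_union_eq hdisj (Set.toFinite _) (Set.toFinite _),
      Set.ncard_image_of_injective _ (fun a b h => by injection h),
      Set.ncard_image_of_injective _ (fun a b h => by injection h),
      Set.ncard_univ, Nat.card_eq_fintype_card, Fintype.card_fin] at hcard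
  have hCbound : descCount T RedVertex.hubC ≤ n + p := StmtAux.desc_hubC_le hlife
  have hfinal : I.ncard + n ≤ n + p := le_trans hcard hCbound
  omega
end

section
/- In any spanning tree T of the reduction graph G_red with lifetime at least one, every element node w_j has no descendants (it is a leaf of T), and the T-parent of w_j is a subset node s_i with j ∈ B_i. -/
open SimpleGraph

/-- Injection of `RedVertex` into a finite type. -/
private def redToSum {k n : ℕ} : RedVertex k n → (Fin 3 ⊕ Fin k ⊕ Fin k ⊕ Fin n)
  | .sink => .inl 0
  | .hubA => .inl 1
  | .hubC => .inl 2
  | .row i => .inr (.inl i)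
  | .sub i => .inr (.inr (.inl i))
  | .elt j => .inr (.inr (.inr j))

instance {k n : ℕ} : Finite (RedVertex k n) := by
  apply Finite.of_injective redToSum
  intro x y h
  cases x <;> cases y <;> simp_all [redToSum]

private lemma adj_elt {k n : ℕ} {B : Fin k → Finset (Fin n)}
    {T : SimpleGraph (RedVertex k n)} (hsub : T ≤ GRed B) {j : Fin n}
    {x : RedVertex k n} (h : T.Adj (RedVertex.elt j) x) :
    ∃ i : Fin k, j ∈ B i ∧ x = RedVertex.sub i := by
  have h' := hsub h
  rw [GRed, fromRel_adj] at h'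
  obtain ⟨-, h1 | h2⟩ := h'
  · cases x <;> simp [redRel] at h1
  · cases x <;> simp [redRel] at h2
    case sub i => exact ⟨i, h2, rfl⟩

/-- In any spanning tree `T` of `G_red` with lifetime at least one,
every element node `w_j` has no descendants (it is a leaf of `T`), and its `T`-parent
is a subset node `s_i` with `j ∈ B_i`. -/
theorem stmt_3 {k n : ℕ} (hk : 1 ≤ k) (hn : 1 ≤ n)
    (B : Fin k → Finset (Fin n)) (hcov : ∀ j : Fin n, ∃ i : Fin k, j ∈ B i)
    (p : ℕ) (hp1 : 1 ≤ p) (hpk : p ≤ k) (a : ℝ) (ha : 0 ≤ a)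
    (T : SimpleGraph (RedVertex k n)) (hsub : T ≤ GRed B) (htree : T.IsTree)
    (hlife : LifetimeGeOne B p a T) :
    ∀ j : Fin n,
      {x : RedVertex k n | IsDesc T (RedVertex.elt j) x} = ∅ ∧
      ∃ i : Fin k, j ∈ B i ∧ IsParent T (RedVertex.elt j) (RedVertex.sub i) := by
  intro j
  -- leaf part
  have hne : (RedVertex.elt j : RedVertex k n) ≠ RedVertex.sink := by simp
  have hl := hlife (RedVertex.elt j) hne
  simp only [energy] at hl
  have hd0 : descCount T (RedVertex.elt j) = 0 := by
    have : (descCount T (RedVertex.elt j) : ℝ) ≤ 0 := by linarith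
    exact_mod_cast le_antisymm (by exact_mod_cast this) (Nat.zero_le _)
  have hempty : {x : RedVertex k n | IsDesc T (RedVertex.elt j) x} = ∅ :=
    (Set.ncard_eq_zero (Set.toFinite _)).mp hd0
  refine ⟨hempty, ?_⟩
  -- parent part
  obtain ⟨w⟩ := htree.isConnected.preconnected (RedVertex.elt j) RedVertex.sink
  let p0 := w.toPath
  obtain ⟨v, hadj, q, hq⟩ := SimpleGraph.Walk.exists_eq_cons_of_ne hne p0.1
  obtain ⟨i, hij, rfl⟩ := adj_elt hsub hadj
  refine ⟨i, hij, hadj, ?_⟩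
  intro p'
  obtain ⟨r, -, hun⟩ := htree.existsUnique_path (RedVertex.elt j) RedVertex.sink
  have h1 : p'.1 = r := hun p'.1 p'.2
  have h2 : p0.1 = r := hun p0.1 p0.2
  rw [h1, ← h2, hq, SimpleGraph.Walk.support_cons]
  exact List.mem_cons_of_mem _ q.start_mem_support
end

section
/- In any spanning tree T of the reduction graph G_red with lifetime at least one, every third-row node r_i has at most one descendant; consequently, any subset node s_i whose T-parent is r_i has no descendants, and in particular no element node has such an s_i as its T-parent. -/
open SimpleGraph

instance inst_s4 {k n : ℕ} : Finite (RedVertex k n) := by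
  apply Finite.of_injective (fun v : RedVertex k n =>
    (match v with
      | .sink => Sum.inl 0
      | .hubA => Sum.inl 1
      | .hubC => Sum.inl 2
      | .row i => Sum.inr (Sum.inl (Sum.inl i))
      | .sub i => Sum.inr (Sum.inl (Sum.inr i))
      | .elt j => Sum.inr (Sum.inr j) : Fin 3 ⊕ (Fin k ⊕ Fin k) ⊕ Fin n))
  intro x y h
  cases x <;> cases y <;> simp_all

lemma desc_finite {k n : ℕ} (T : SimpleGraph (RedVertex k n)) (u : RedVertex k n) :
    {x | IsDesc T u x}.Finite := Set.toFinite _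

/-- If v is the T-parent of u in a tree then u is a descendant of v, and every
descendant of u is a descendant of v. -/
lemma desc_of_parent {k n : ℕ} {T : SimpleGraph (RedVertex k n)} (htree : T.IsTree)
    {u v : RedVertex k n} (hp : IsParent T u v) (hu : u ≠ RedVertex.sink)
    (huv : u ≠ v) :
    IsDesc T v u ∧ ∀ x, IsDesc T u x → IsDesc T v x := by
  have hreach : T.Reachable v RedVertex.sink := htree.isConnected.preconnected _ _
  constructor
  · exact ⟨huv, hu, hp.2⟩
  · rintro x ⟨hxu, hxs, hx⟩
    have hxv : x ≠ v := by
      intro hxveq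
      rw [hxveq] at hx
      -- then every path from v to sink passes through u, and every path from u
      -- to sink passes through v: contradiction with uniqueness/nodup
      obtain ⟨w⟩ := hreach
      set P := w.toPath with hP
      have huP : u ∈ P.1.support := hx P
      have hdrop : (P.1.dropUntil u huP).IsPath := P.2.dropUntil huP
      have hvQ : v ∈ (P.1.dropUntil u huP).support :=
        hp.2 ⟨P.1.dropUntil u huP, hdrop⟩
      -- v is the start of P and u ≠ v, so v cannot be in the drop part
      have hnodup := P.2.support_nodup
      have hspec := P.1.take_spec huP
      have : P.1.support = (P.1.takeUntil u huP).support ++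
          (P.1.dropUntil u huP).support.tail := by
        rw [← SimpleGraph.Walk.support_append, hspec]
      rw [this] at hnodup
      have hvtake : v ∈ (P.1.takeUntil u huP).support :=
        SimpleGraph.Walk.start_mem_support _
      have hvtail : v ∉ (P.1.dropUntil u huP).support.tail := by
        intro hmem
        exact (List.disjoint_of_nodup_append hnodup) hvtake hmem
      have : (P.1.dropUntil u huP).support = u :: (P.1.dropUntil u huP).support.tail := by
        rw [← SimpleGraph.Walk.support_eq_cons]
      rw [this] at hvQ
      rcases List.mem_cons.mp hvQ with h | h
      · exact huv h.symm
      · exact hvtail h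
    refine ⟨hxv, hxs, ?_⟩
    intro P
    have huP : u ∈ P.1.support := hx P
    have hdrop : (P.1.dropUntil u huP).IsPath := P.2.dropUntil huP
    have hvQ : v ∈ (P.1.dropUntil u huP).support :=
      hp.2 ⟨P.1.dropUntil u huP, hdrop⟩
    exact SimpleGraph.Walk.support_dropUntil_subset _ huP hvQ

/-- In any spanning tree `T` of `G_red` with lifetime at least one,
every third-row node `r_i` has at most one descendant; consequently, any subset node
whose `T`-parent is a third-row node has no descendants, and in particular no element
node has such a subset node as its `T`-parent. -/
theorem stmt_4 {k n : ℕ} (hk : 1 ≤ k) (hn : 1 ≤ n)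
    (B : Fin k → Finset (Fin n)) (hcov : ∀ j : Fin n, ∃ i : Fin k, j ∈ B i)
    (p : ℕ) (hp1 : 1 ≤ p) (hpk : p ≤ k) (a : ℝ) (ha : 0 ≤ a)
    (T : SimpleGraph (RedVertex k n)) (hsub : T ≤ GRed B) (htree : T.IsTree)
    (hlife : LifetimeGeOne B p a T) :
    (∀ i : Fin k, descCount T (RedVertex.row i) ≤ 1) ∧
    (∀ i i' : Fin k, IsParent T (RedVertex.sub i') (RedVertex.row i) →
      {x : RedVertex k n | IsDesc T (RedVertex.sub i') x} = ∅ ∧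
      ∀ j : Fin n, ¬ IsParent T (RedVertex.elt j) (RedVertex.sub i')) := by
  have hrow : ∀ i : Fin k, descCount T (RedVertex.row i) ≤ 1 := by
    intro i
    have h := hlife (RedVertex.row i) (by simp)
    simp only [energy] at h
    have : (descCount T (RedVertex.row i) : ℝ) ≤ 1 := by linarith
    exact_mod_cast this
  refine ⟨hrow, ?_⟩
  intro i i' hpar
  have hne : (RedVertex.sub i' : RedVertex k n) ≠ RedVertex.row i := by simp
  obtain ⟨hsubdesc, hmono⟩ := desc_of_parent htree hpar (by simp) hne
  have hsubset : insert (RedVertex.sub i' : RedVertex k n)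
      {x | IsDesc T (RedVertex.sub i') x} ⊆ {x | IsDesc T (RedVertex.row i) x} := by
    rintro x hx
    rcases hx with rfl | hx
    · exact hsubdesc
    · exact hmono _ hx
  have hnotmem : (RedVertex.sub i' : RedVertex k n) ∉
      {x | IsDesc T (RedVertex.sub i') x} := fun h => h.1 rfl
  have hcard : {x : RedVertex k n | IsDesc T (RedVertex.sub i') x}.ncard + 1 ≤
      descCount T (RedVertex.row i) := by
    have h1 := Set.ncard_le_ncard hsubset (desc_finite T _)
    rwa [Set.ncard_insert_of_notMem hnotmem (desc_finite T _)] at h1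
  have hzero : {x : RedVertex k n | IsDesc T (RedVertex.sub i') x}.ncard = 0 := by
    have h2 := hrow i
    unfold descCount at hcard h2
    omega
  have hempty : {x : RedVertex k n | IsDesc T (RedVertex.sub i') x} = ∅ :=
    (Set.ncard_eq_zero (desc_finite T _)).mp hzero
  refine ⟨hempty, ?_⟩
  intro j hparj
  have : IsDesc T (RedVertex.sub i') (RedVertex.elt j) :=
    ⟨by simp, by simp, hparj.2⟩
  have : (RedVertex.elt j : RedVertex k n) ∈
      {x : RedVertex k n | IsDesc T (RedVertex.sub i') x} := this
  rw [hempty] at this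
  exact this
end

section
/- In any spanning tree T of the reduction graph G_red with lifetime at least one, the T-parent of the hub node C is the sink v0, and every subset node s_i that is the T-parent of some element node w_j has T-parent equal to C. -/
open SimpleGraph

section Aux

open RedVertex SimpleGraph.Walk

variable {k n : ℕ} {B : Fin k → Finset (Fin n)} {T : SimpleGraph (RedVertex k n)}

instance : Finite (RedVertex k n) :=
  Finite.of_injective
    (fun v : RedVertex k n =>
      match v with
      | .sink => (.inl 0 : Fin 3 ⊕ Fin k ⊕ Fin k ⊕ Fin n)
      | .hubA => .inl 1
      | .hubC => .inl 2
      | .row i => .inr (.inl i)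
      | .sub i => .inr (.inr (.inl i))
      | .elt j => .inr (.inr (.inr j)))
    (by intro a b h; cases a <;> cases b <;> simp_all)

lemma path_eq (htree : T.IsTree) {x y : RedVertex k n} {p q : T.Walk x y}
    (hp : p.IsPath) (hq : q.IsPath) : p = q :=
  (htree.existsUnique_path x y).unique hp hq

lemma isDesc_of_mem (htree : T.IsTree) {x u : RedVertex k n} {q : T.Walk x .sink}
    (hq : q.IsPath) (hx : x ≠ .sink) (hne : x ≠ u) (hu : u ∈ q.support) :
    IsDesc T u x :=
  ⟨hne, hx, fun p => by rw [path_eq htree p.2 hq]; exact hu⟩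

lemma descCount_pos {u x : RedVertex k n} (h : IsDesc T u x) : 0 < descCount T u := by
  rw [descCount, Set.ncard_pos (Set.toFinite _)]
  exact ⟨x, h⟩

lemma two_le_descCount {u x y : RedVertex k n} (hx : IsDesc T u x) (hy : IsDesc T u y)
    (hxy : x ≠ y) : 2 ≤ descCount T u := by
  have hss : ({x, y} : Set (RedVertex k n)) ⊆ {z | IsDesc T u z} := by
    intro z hz
    simp only [Set.mem_insert_iff, Set.mem_singleton_iff] at hz
    rcases hz with rfl | rfl <;> assumption
  calc 2 = ({x, y} : Set (RedVertex k n)).ncard := (Set.ncard_pair hxy).symm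
    _ ≤ _ := Set.ncard_le_ncard hss (Set.toFinite _)

lemma no_desc_elt {p : ℕ} {a : ℝ} (hlife : LifetimeGeOne B p a T) (j : Fin n)
    {x : RedVertex k n} (h : IsDesc T (elt j) x) : False := by
  have h1 := hlife (elt j) (by intro h'; cases h')
  have he : energy B p a (elt j) = 1 + a := rfl
  have h2 := descCount_pos h
  have h3 : (1:ℝ) ≤ (descCount T (elt j) : ℝ) := by exact_mod_cast h2
  rw [he] at h1; linarith

lemma row_two_desc {p : ℕ} {a : ℝ} (hlife : LifetimeGeOne B p a T) (i : Fin k)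
    {x y : RedVertex k n} (hx : IsDesc T (row i) x) (hy : IsDesc T (row i) y)
    (hxy : x ≠ y) : False := by
  have h1 := hlife (row i) (by intro h'; cases h')
  have he : energy B p a (row i) = 2 + a := rfl
  have h2 := two_le_descCount hx hy hxy
  have h3 : (2:ℝ) ≤ (descCount T (row i) : ℝ) := by exact_mod_cast h2
  rw [he] at h1; linarith

lemma adj_class (hsub : T ≤ GRed B) {u v : RedVertex k n} (h : T.Adj u v) :
    redRel B u v ∨ redRel B v u := by
  have h' := hsub h
  simp only [GRed, SimpleGraph.fromRel_adj] at h'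
  exact h'.2

lemma adj_hubC (hsub : T ≤ GRed B) {v : RedVertex k n} (h : T.Adj .hubC v) :
    v = .sink ∨ ∃ i, v = .sub i := by
  rcases adj_class hsub h with h' | h' <;> cases v <;> simp_all [redRel]

lemma adj_sub (hsub : T ≤ GRed B) {i : Fin k} {v : RedVertex k n} (h : T.Adj (.sub i) v) :
    v = .hubC ∨ v = .row i ∨ ∃ j, v = .elt j := by
  rcases adj_class hsub h with h' | h' <;> cases v <;> simp_all [redRel]

end Aux
/-- In any spanning tree `T` of `G_red` with lifetime at least one,
the `T`-parent of the hub node `C` is the sink `v0`, and every subset node `s_i`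
that is the `T`-parent of some element node has `T`-parent equal to `C`. -/
theorem stmt_5 {k n : ℕ} (hk : 1 ≤ k) (hn : 1 ≤ n)
    (B : Fin k → Finset (Fin n)) (hcov : ∀ j : Fin n, ∃ i : Fin k, j ∈ B i)
    (p : ℕ) (hp1 : 1 ≤ p) (hpk : p ≤ k) (a : ℝ) (ha : 0 ≤ a)
    (T : SimpleGraph (RedVertex k n)) (hsub : T ≤ GRed B) (htree : T.IsTree)
    (hlife : LifetimeGeOne B p a T) :
    IsParent T RedVertex.hubC RedVertex.sink ∧
    ∀ i : Fin k, (∃ j : Fin n, IsParent T (RedVertex.elt j) (RedVertex.sub i)) →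
      IsParent T (RedVertex.sub i) RedVertex.hubC := by
  classical
  have hC : T.Adj RedVertex.hubC RedVertex.sink := by
    obtain ⟨P, hP, -⟩ := htree.existsUnique_path RedVertex.hubC RedVertex.sink
    cases P with
    | @cons _ v _ h q =>
      rcases adj_hubC hsub h with rfl | ⟨i, rfl⟩
      · exact h
      · have hq : q.IsPath := ((Walk.cons_isPath_iff _ _).mp hP).1
        cases q with
        | @cons _ v₂ _ h₂ q₂ =>
          have hCq : RedVertex.hubC ∉ (Walk.cons h₂ q₂).support :=
            ((Walk.cons_isPath_iff _ _).mp hP).2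
          rcases adj_sub hsub h₂ with rfl | rfl | ⟨j, rfl⟩
          · exact absurd
              (by rw [Walk.support_cons]
                  exact List.mem_cons_of_mem _ q₂.start_mem_support) hCq
          · -- second vertex is row i : row i has two descendants hubC and sub i
            have d1 : IsDesc T (.row i) .hubC :=
              isDesc_of_mem htree hP (by intro h'; cases h') (by intro h'; cases h')
                (by rw [Walk.support_cons, Walk.support_cons]
                    exact List.mem_cons_of_mem _
                      (List.mem_cons_of_mem _ q₂.start_mem_support))
            have d2 : IsDesc T (.row i) (.sub i) :=
              isDesc_of_mem htree hq (by intro h'; cases h') (by intro h'; cases h')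
                (by rw [Walk.support_cons]
                    exact List.mem_cons_of_mem _ q₂.start_mem_support)
            exact (row_two_desc hlife i d1 d2 (by intro h'; cases h')).elim
          · -- second vertex is elt j : hubC is a descendant of elt j
            have d1 : IsDesc T (.elt j) .hubC :=
              isDesc_of_mem htree hP (by intro h'; cases h') (by intro h'; cases h')
                (by rw [Walk.support_cons, Walk.support_cons]
                    exact List.mem_cons_of_mem _
                      (List.mem_cons_of_mem _ q₂.start_mem_support))
            exact (no_desc_elt hlife j d1).elim
  refine ⟨⟨hC, fun pth => pth.1.end_mem_support⟩, ?_⟩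
  rintro i ⟨j, hadj, -⟩
  obtain ⟨Q, hQ, -⟩ := htree.existsUnique_path (RedVertex.sub i) RedVertex.sink
  cases Q with
  | @cons _ v _ h q =>
    have hq : q.IsPath := ((Walk.cons_isPath_iff _ _).mp hQ).1
    rcases adj_sub hsub h with rfl | rfl | ⟨j', rfl⟩
    · -- parent is hubC : done
      refine ⟨h, fun pth => ?_⟩
      have heq : pth.1 = Walk.cons h q := path_eq htree pth.2 hQ
      rw [heq, Walk.support_cons]
      exact List.mem_cons_of_mem _ q.start_mem_support
    · -- parent is row i : row i has descendants sub i and elt j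
      have d1 : IsDesc T (.row i) (.sub i) :=
        isDesc_of_mem htree hQ (by intro h'; cases h') (by intro h'; cases h')
          (by rw [Walk.support_cons]
              exact List.mem_cons_of_mem _ q.start_mem_support)
      have hnotin : RedVertex.elt j ∉ (Walk.cons h q).support := by
        intro hmem
        exact no_desc_elt hlife j
          (isDesc_of_mem htree hQ (by intro h'; cases h') (by intro h'; cases h') hmem)
      have hW : (Walk.cons hadj (Walk.cons h q)).IsPath :=
        (Walk.cons_isPath_iff _ _).mpr ⟨hQ, hnotin⟩
      have d2 : IsDesc T (.row i) (.elt j) :=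
        isDesc_of_mem htree hW (by intro h'; cases h') (by intro h'; cases h')
          (by rw [Walk.support_cons, Walk.support_cons]
              exact List.mem_cons_of_mem _
                (List.mem_cons_of_mem _ q.start_mem_support))
      exact (row_two_desc hlife i d1 d2 (by intro h'; cases h')).elim
    · -- parent is elt j' : sub i is a descendant of elt j'
      exact (no_desc_elt hlife j'
        (isDesc_of_mem htree hQ (by intro h'; cases h') (by intro h'; cases h')
          (by rw [Walk.support_cons]
              exact List.mem_cons_of_mem _ q.start_mem_support))).elim
end
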